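/- Let X be a compact Hausdorff topological space equipped with a preorder, and let Y be a complete lattice carrying a Lawson-lattice topology. Suppose g₁, g₂ : X → Y are monotone continuous maps that are homotopic through monotone maps. Then there exists a monotone continuous map m : X → Y that future homotopes to both g₁ and g₂: there exist continuous maps h₁, h₂ : X × [0,1] → Y, each monotone with respect to the product order (the given preorder on X and the standard order on [0,1]), with h₁(·,0) = m, h₁(·,1) = g₁, h₂(·,0) = m, and h₂(·,1) = g₂. -/

import Mathlib

/-!
Take `m x := ⨅ s, H (x, s)` and, for `H` and for its reversal `H (·, 1 - ·)`, the future
homotopy `(x, t) ↦ ⨅ s ≤ 1 - t, H (x, s)`, which runs from `m` to the endpoint `H (·, 0)`;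
monotonicity is clear, the difficulty is continuity. In a compact semilattice with small
semilattices, an infimum `⨅ k, G x k` over a compact parameter space depends continuously
on `x`. By compactness, `⨅ k, G x₀ k` is approximated by a finite infimum
`c x := ⨅ k ∈ F, G x k`, which is continuous in `x`. If `W` is a closed ⊓-closed
neighbourhood of `⨅ k, G x₀ k`, the tube lemma keeps every `c x ⊓ G x k` in `W` for `x` near
`x₀`, hence also their infimum, and that is `⨅ k, G x k` because `c x` is an upper bound of it.
-/

open Filter Topology Set Function unitInterval

theorem OrderClosedTopology.of_continuousInf {Y : Type*} [SemilatticeInf Y] [TopologicalSpace Y]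
    [T2Space Y] [ContinuousInf Y] : OrderClosedTopology Y where
  isClosed_le' := by
    simpa only [inf_eq_left] using
      isClosed_eq (continuous_inf : Continuous fun p : Y × Y => p.1 ⊓ p.2) continuous_fst

theorem InfClosed.closure {Y : Type*} [SemilatticeInf Y] [TopologicalSpace Y] [ContinuousInf Y]
    {S : Set Y} (hS : InfClosed S) : InfClosed (closure S) :=
  fun _ ha _ hb => map_mem_closure₂ continuous_inf ha hb fun _ ha' _ hb' => hS ha' hb'

theorem Filter.HasBasis.isClosed_infClosed {Y : Type*} [SemilatticeInf Y] [TopologicalSpace Y]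
    [RegularSpace Y] [ContinuousInf Y] {a : Y}
    (h : (𝓝 a).HasBasis (fun S => S ∈ 𝓝 a ∧ InfClosed S) id) :
    (𝓝 a).HasBasis (fun W => W ∈ 𝓝 a ∧ IsClosed W ∧ InfClosed W) id := by
  refine ⟨fun V => ⟨fun hV => ?_, fun ⟨W, ⟨hW, _⟩, hWV⟩ => mem_of_superset hW hWV⟩⟩
  obtain ⟨C, hC, hCc, hCV⟩ := exists_mem_nhds_isClosed_subset hV
  obtain ⟨S, ⟨hS, hSinf⟩, hSC⟩ := h.mem_iff.1 hC
  exact ⟨closure S, ⟨mem_of_superset hS subset_closure, isClosed_closure, hSinf.closure⟩,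
    (closure_minimal hSC hCc).trans hCV⟩

section CompactLattice

variable {Y : Type*} [CompleteLattice Y] [TopologicalSpace Y] [CompactSpace Y]
  [OrderClosedTopology Y] {ι : Type*} {f : ι → Y}

theorem iInf_mem_of_forall_finset {C : Set Y} (hC : IsClosed C)
    (h : ∀ F : Finset ι, ∃ c ∈ C, ⨅ i, f i ≤ c ∧ ∀ i ∈ F, c ≤ f i) : ⨅ i, f i ∈ C := by
  obtain ⟨c, ⟨hcC, hfc⟩, hcf⟩ := (hC.inter isClosed_Ici).isCompact.inter_iInter_nonempty
    (fun i => Iic (f i)) (fun _ => isClosed_Iic) fun F => by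
      obtain ⟨c, hcC, hfc, hcf⟩ := h F
      exact ⟨c, ⟨hcC, hfc⟩, mem_iInter₂.2 hcf⟩
  have hc : c = ⨅ i, f i := le_antisymm (le_iInf fun i => mem_iInter.1 hcf i) hfc
  exact hc ▸ hcC

theorem InfClosed.iInf_mem_of_isClosed [Nonempty ι] {W : Set Y} (hWinf : InfClosed W)
    (hW : IsClosed W) (hf : ∀ i, f i ∈ W) : ⨅ i, f i ∈ W := by
  classical
  obtain ⟨i₀⟩ := ‹Nonempty ι›
  refine iInf_mem_of_forall_finset hW fun F => ⟨(insert i₀ F).inf' (F.insert_nonempty i₀) f,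
    hWinf.finsetInf'_mem _ fun i _ => hf i, Finset.le_inf' _ _ fun i _ => iInf_le f i,
    fun i hi => Finset.inf'_le _ (Finset.mem_insert_of_mem hi)⟩

theorem exists_finset_inf_mem_of_iInf_mem_nhds {O : Set Y} (hO : O ∈ 𝓝 (⨅ i, f i)) :
    ∃ F : Finset ι, F.inf f ∈ O := by
  by_contra! h
  refine iInf_mem_of_forall_finset isOpen_interior.isClosed_compl (fun F => ⟨F.inf f,
    fun hF => h F (interior_subset hF), Finset.le_inf fun i _ => iInf_le f i,
    fun _ hi => Finset.inf_le hi⟩) (mem_interior_iff_mem_nhds.2 hO)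

variable [ContinuousInf Y]

theorem continuous_iInf_of_compactSpace
    (hbasis : ∀ a : Y, (𝓝 a).HasBasis (fun W => W ∈ 𝓝 a ∧ IsClosed W ∧ InfClosed W) id)
    {X K : Type*} [TopologicalSpace X] [TopologicalSpace K] [CompactSpace K] {G : X → K → Y}
    (hG : Continuous (uncurry G)) : Continuous fun x => ⨅ k, G x k := by
  rcases isEmpty_or_nonempty K with hK | hK
  · simpa only [iInf_of_empty] using continuous_const
  refine continuous_iff_continuousAt.2 fun x₀ =>
    (hbasis _).tendsto_right_iff.2 fun W ⟨hW, hWc, hWinf⟩ => ?_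
  have htube : ∀ᶠ p : Y × X in 𝓝 (⨅ k, G x₀ k, x₀), ∀ k ∈ univ, p.1 ⊓ G p.2 k ∈ W := by
    refine isCompact_univ.eventually_forall_of_forall_eventually fun k _ => ?_
    have hcont : Continuous fun q : (Y × X) × K => q.1.1 ⊓ G q.1.2 q.2 :=
      continuous_fst.fst.inf (hG.comp (continuous_fst.snd.prodMk continuous_snd))
    refine hcont.continuousAt.preimage_mem_nhds ?_
    simpa only [inf_eq_left.2 (iInf_le (G x₀) k)] using hW
  obtain ⟨O, U, hO, haO, hU, hxU, hOU⟩ := mem_nhds_prod_iff'.1 htube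
  obtain ⟨F, hF⟩ := exists_finset_inf_mem_of_iInf_mem_nhds (hO.mem_nhds haO)
  have hFcont : Continuous fun x => F.inf (G x) :=
    Continuous.finset_inf_apply fun k _ => hG.comp (Continuous.prodMk_left k)
  filter_upwards [hU.mem_nhds hxU, hFcont.continuousAt.preimage_mem_nhds (hO.mem_nhds hF)]
    with x hxU hxO
  have hxW : ∀ k, F.inf (G x) ⊓ G x k ∈ W := fun k =>
    hOU (show (F.inf (G x), x) ∈ O ×ˢ U from ⟨hxO, hxU⟩) k (mem_univ k)
  rw [← inf_eq_right.2 (Finset.le_inf fun k _ => iInf_le (G x) k), inf_iInf]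
  exact hWinf.iInf_mem_of_isClosed hWc hxW

theorem exists_monotone_homotopy_iInf_to_zero
    (hbasis : ∀ a : Y, (𝓝 a).HasBasis (fun W => W ∈ 𝓝 a ∧ IsClosed W ∧ InfClosed W) id)
    {X : Type*} [TopologicalSpace X] [Preorder X] {H : X × I → Y} (hH : Continuous H)
    (hHm : ∀ t : I, Monotone fun x : X => H (x, t)) :
    ∃ h : X × I → Y, Continuous h ∧ Monotone h ∧
      (∀ x, h (x, 0) = ⨅ s, H (x, s)) ∧ ∀ x, h (x, 1) = H (x, 0) := by
  -- Writing `⨅ s ≤ σ t` as `⨅ s, H (x, min s (σ t))` makes the index space fixed and compact.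
  have hcont : Continuous fun q : (X × I) × I => H (q.1.1, min q.2 (σ q.1.2)) :=
    hH.comp (continuous_fst.fst.prodMk
      (continuous_snd.min (continuous_symm.comp continuous_fst.snd)))
  refine ⟨fun p => ⨅ s, H (p.1, min s (σ p.2)), continuous_iInf_of_compactSpace hbasis hcont,
    ?_, fun x => by simp [le_one'], fun x => by simp⟩
  rintro ⟨x₁, t₁⟩ ⟨x₂, t₂⟩ ⟨hx, ht⟩
  refine le_iInf fun s => (iInf_le _ (min s (σ t₂))).trans ?_
  rw [min_eq_left ((min_le_right _ _).trans (symm_le_symm.2 ht))]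
  exact hHm _ hx

end CompactLattice

theorem stmt_9_general {X Y : Type*} [TopologicalSpace X] [Preorder X]
    [CompleteLattice Y] [TopologicalSpace Y] [CompactSpace Y] [T2Space Y]
    (hinf : Continuous fun p : Y × Y => p.1 ⊓ p.2)
    (hbasis : ∀ y : Y, (nhds y).HasBasis
      (fun s : Set Y => s ∈ nhds y ∧ ∀ a ∈ s, ∀ b ∈ s, a ⊓ b ∈ s) id)
    (g₁ g₂ : X → Y)
    (H : X × I → Y) (hH : Continuous H)
    (hH0 : ∀ x, H (x, 0) = g₁ x) (hH1 : ∀ x, H (x, 1) = g₂ x)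
    (hHm : ∀ t : I, Monotone fun x : X => H (x, t)) :
    ∃ m : X → Y, Continuous m ∧ Monotone m ∧
      (∃ h₁ : X × I → Y, Continuous h₁ ∧ Monotone h₁ ∧
        (∀ x, h₁ (x, 0) = m x) ∧ (∀ x, h₁ (x, 1) = g₁ x)) ∧
      (∃ h₂ : X × I → Y, Continuous h₂ ∧ Monotone h₂ ∧
        (∀ x, h₂ (x, 0) = m x) ∧ (∀ x, h₂ (x, 1) = g₂ x)) := by
  have : ContinuousInf Y := ⟨hinf⟩
  have : OrderClosedTopology Y := .of_continuousInf
  have hbasis' := fun y => (hbasis y).isClosed_infClosed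
  obtain ⟨h₁, hc₁, hm₁, h₁0, h₁1⟩ := exists_monotone_homotopy_iInf_to_zero hbasis' hH hHm
  have hHσ : Continuous fun p : X × I => H (p.1, σ p.2) :=
    hH.comp (continuous_fst.prodMk (continuous_symm.comp continuous_snd))
  obtain ⟨h₂, hc₂, hm₂, h₂0, h₂1⟩ :=
    exists_monotone_homotopy_iInf_to_zero hbasis' hHσ fun t => hHm (σ t)
  refine ⟨fun x => ⨅ s, H (x, s), continuous_iInf_of_compactSpace hbasis' hH,
    fun _ _ hx => iInf_mono fun s => hHm s hx, ⟨h₁, hc₁, hm₁, h₁0, fun x => ?_⟩,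
    ⟨h₂, hc₂, hm₂, fun x => ?_, fun x => ?_⟩⟩
  · rw [h₁1, hH0]
  · rw [h₂0, symm_bijective.surjective.iInf_comp fun s => H (x, s)]
  · rw [h₂1, symm_zero, hH1]

/-- Let `X` be a compact Hausdorff preordered space and `Y` a complete lattice carrying
a Lawson-lattice topology.  If monotone continuous maps `g₁, g₂ : X → Y` are homotopic
through monotone maps, then some monotone continuous map `m : X → Y` future homotopes
to both `g₁` and `g₂`. -/
theorem stmt_9 {X Y : Type*} [TopologicalSpace X] [Preorder X]
    [CompactSpace X] [T2Space X]
    [CompleteLattice Y] [TopologicalSpace Y] [CompactSpace Y] [T2Space Y]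
    (hinf : Continuous fun p : Y × Y => p.1 ⊓ p.2)
    (hbasis : ∀ y : Y, (nhds y).HasBasis
      (fun s : Set Y => s ∈ nhds y ∧ ∀ a ∈ s, ∀ b ∈ s, a ⊓ b ∈ s) id)
    (g₁ g₂ : X → Y) (hg₁ : Continuous g₁) (hg₁m : Monotone g₁)
    (hg₂ : Continuous g₂) (hg₂m : Monotone g₂)
    (H : X × I → Y) (hH : Continuous H)
    (hH0 : ∀ x, H (x, 0) = g₁ x) (hH1 : ∀ x, H (x, 1) = g₂ x)
    (hHm : ∀ t : I, Monotone fun x : X => H (x, t)) :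
    ∃ m : X → Y, Continuous m ∧ Monotone m ∧
      (∃ h₁ : X × I → Y, Continuous h₁ ∧ Monotone h₁ ∧
        (∀ x, h₁ (x, 0) = m x) ∧ (∀ x, h₁ (x, 1) = g₁ x)) ∧
      (∃ h₂ : X × I → Y, Continuous h₂ ∧ Monotone h₂ ∧
        (∀ x, h₂ (x, 0) = m x) ∧ (∀ x, h₂ (x, 1) = g₂ x)) :=
  stmt_9_general hinf hbasis g₁ g₂ H hH hH0 hH1 hHm
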